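/- Let M ∈ ℝ^{N×d} have full column rank d, let c ∈ ℝ^N, let ε₀ > 0, ε ≥ 0, δ ≥ 0, and let S, Σ̄ ∈ ℝ^{N×N} be symmetric positive definite with Σ̄ − S positive semidefinite. Assume that for all d₁, d₂ ∈ ℝ^d with 0 < ‖d₁ − d₂‖ ≤ ε₀ one has Q(ε/‖M(d₁−d₂)‖_{S⁻¹} − ‖M(d₁−d₂)‖_{S⁻¹}/2) ≤ δ. Then for all d₁, d₂ ∈ ℝ^d with ‖d₁ − d₂‖ ≤ ε₀ and every Borel set T ⊆ ℝ^N, N(M d₁ + c, Σ̄)(T) ≤ e^ε · N(M d₂ + c, Σ̄)(T) + δ. -/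

import Mathlib

open MeasureTheory Matrix

/-- Density of the multivariate Gaussian `N(m, S)` on `ℝ^N`. -/
noncomputable def gaussianPdf {N : ℕ} (m : Fin N → ℝ) (S : Matrix (Fin N) (Fin N) ℝ)
    (u : Fin N → ℝ) : ℝ :=
  (Real.sqrt ((2 * Real.pi) ^ N * S.det))⁻¹ *
    Real.exp (-(1 / 2) * ((u - m) ⬝ᵥ S⁻¹ *ᵥ (u - m)))

/-- The multivariate Gaussian measure `N(m, S)` on `ℝ^N`. -/
noncomputable def gaussianMeasure {N : ℕ} (m : Fin N → ℝ) (S : Matrix (Fin N) (Fin N) ℝ) :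
    Measure (Fin N → ℝ) :=
  volume.withDensity fun u => ENNReal.ofReal (gaussianPdf m S u)

/-- The Gaussian tail function `Q(x) = (1/√(2π)) ∫_x^∞ exp(-z²/2) dz`. -/
noncomputable def gaussQ (x : ℝ) : ℝ :=
  (Real.sqrt (2 * Real.pi))⁻¹ * ∫ z in Set.Ioi x, Real.exp (-z ^ 2 / 2)

/-- The weighted norm `‖μ‖_A = √(μᵀ A μ)`. -/
noncomputable def wnorm {N : ℕ} (A : Matrix (Fin N) (Fin N) ℝ) (μ : Fin N → ℝ) : ℝ :=
  Real.sqrt (μ ⬝ᵥ A *ᵥ μ)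

/-!
Put `y = M (d₁ - d₂)` and `a = ‖y‖_{Σ̄⁻¹}`. The likelihood ratio of `N(M d₁ + c, Σ̄)` to
`N(M d₂ + c, Σ̄)` at `u` is `exp (yᵀ Σ̄⁻¹ (u - M d₁ - c) + a² / 2)`, so it exceeds `e^ε` only
on a half-space `B`. Realising `N(m, C Cᵀ)` as the image of the standard Gaussian under
`x ↦ m + C x`, the linear form `yᵀ Σ̄⁻¹ (u - m)` is `N(0, a²)`-distributed, hence the first
measure gives `B` mass `Q(ε / a - a / 2)`. Finally `Σ̄ ⪰ S` gives `a ≤ ‖y‖_{S⁻¹}`, and both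
`Q` and `s ↦ ε / s - s / 2` are decreasing.
-/

open ProbabilityTheory

section LinearAlgebra

variable {n : Type*} [Fintype n]

lemma Matrix.mulVec_injective_of_rank_eq {m K : Type*} [Fintype m] [Field K]
    {M : Matrix m n K} (hM : M.rank = Fintype.card n) : Function.Injective M.mulVec := by
  have h := LinearMap.finrank_range_add_finrank_ker M.mulVecLin
  rw [← Matrix.rank, hM, Module.finrank_fintype_fun_eq_card, add_eq_left] at h
  exact LinearMap.ker_eq_bot.mp (Submodule.finrank_eq_zero.mp h)

lemma Matrix.IsHermitian.dotProduct_mulVec_comm {B : Matrix n n ℝ} (hB : B.IsHermitian)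
    (x y : n → ℝ) : x ⬝ᵥ B *ᵥ y = y ⬝ᵥ B *ᵥ x := by
  rw [dotProduct_mulVec, ← mulVec_transpose, ← conjTranspose_eq_transpose_of_trivial, hB.eq,
    dotProduct_comm]

lemma Matrix.PosDef.dotProduct_mulVec_self_pos {A : Matrix n n ℝ} (hA : A.PosDef) {w : n → ℝ}
    (hw : w ≠ 0) : 0 < w ⬝ᵥ A *ᵥ w := by
  simpa using hA.dotProduct_mulVec_pos hw

variable [DecidableEq n]

open scoped MatrixOrder in
lemma Matrix.PosDef.exists_isUnit_mul_transpose_eq {A : Matrix n n ℝ} (hA : A.PosDef) :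
    ∃ C : Matrix n n ℝ, IsUnit C ∧ C * Cᵀ = A := by
  obtain ⟨C, hC, rfl⟩ :=
    CStarAlgebra.isStrictlyPositive_iff_eq_mul_star_self.mp hA.isStrictlyPositive
  exact ⟨C, hC, by rw [star_eq_conjTranspose, conjTranspose_eq_transpose_of_trivial]⟩

lemma Matrix.mulVec_dotProduct_inv_mul_transpose {C : Matrix n n ℝ} (hC : IsUnit C)
    (x : n → ℝ) : (C *ᵥ x) ⬝ᵥ (C * Cᵀ)⁻¹ *ᵥ (C *ᵥ x) = x ⬝ᵥ x := by
  have hCd : IsUnit C.det := (isUnit_iff_isUnit_det C).mp hC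
  have hCTd : IsUnit Cᵀ.det := by rwa [det_transpose]
  rw [Matrix.mul_inv_rev, mulVec_mulVec, Matrix.mul_assoc, nonsing_inv_mul _ hCd, Matrix.mul_one,
    dotProduct_mulVec, vecMul_mulVec, ← mulVec_transpose, mul_nonsing_inv _ hCTd, transpose_one,
    one_mulVec]

lemma Matrix.PosDef.two_mul_dotProduct_sub_le {A : Matrix n n ℝ} (hA : A.PosDef)
    (x μ : n → ℝ) : 2 * (x ⬝ᵥ μ) - x ⬝ᵥ A *ᵥ x ≤ μ ⬝ᵥ A⁻¹ *ᵥ μ := by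
  set y := A⁻¹ *ᵥ μ
  have hAy : A *ᵥ y = μ := by
    rw [mulVec_mulVec, mul_nonsing_inv _ hA.det_pos.ne'.isUnit, one_mulVec]
  -- complete the square: `0 ≤ (x - y)ᵀ A (x - y)`
  have hsq := hA.posSemidef.dotProduct_mulVec_nonneg (x - y)
  have hcomm := hA.1.dotProduct_mulVec_comm x y
  simp only [star_trivial, sub_dotProduct, dotProduct_sub, mulVec_sub, hAy] at hsq hcomm
  rw [dotProduct_comm μ y]
  linarith

lemma Matrix.PosDef.dotProduct_inv_mulVec_le {S Sbar : Matrix n n ℝ} (hS : S.PosDef)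
    (hSbar : Sbar.PosDef) (hle : (Sbar - S).PosSemidef) (μ : n → ℝ) :
    μ ⬝ᵥ Sbar⁻¹ *ᵥ μ ≤ μ ⬝ᵥ S⁻¹ *ᵥ μ := by
  set x := Sbar⁻¹ *ᵥ μ
  have hx : Sbar *ᵥ x = μ := by
    rw [mulVec_mulVec, mul_nonsing_inv _ hSbar.det_pos.ne'.isUnit, one_mulVec]
  have hSx := hle.dotProduct_mulVec_nonneg x
  simp only [star_trivial, sub_mulVec, dotProduct_sub, hx] at hSx
  have := hS.two_mul_dotProduct_sub_le x μ
  rw [dotProduct_comm μ x]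
  linarith

end LinearAlgebra

section StandardGaussian

lemma gaussianReal_Ioi (x : ℝ) : gaussianReal 0 1 (Set.Ioi x) = ENNReal.ofReal (gaussQ x) := by
  rw [gaussianReal_apply_eq_integral _ one_ne_zero, gaussQ, ← integral_const_mul]
  congr 1
  refine setIntegral_congr_fun measurableSet_Ioi fun z _ => ?_
  simp [gaussianPDFReal, neg_div]

lemma gaussQ_nonneg (x : ℝ) : 0 ≤ gaussQ x := by
  unfold gaussQ
  positivity

lemma gaussQ_antitone : Antitone gaussQ := fun x y hxy => by
  have h := measure_mono (μ := gaussianReal 0 1) (Set.Ioi_subset_Ioi hxy)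
  rwa [gaussianReal_Ioi, gaussianReal_Ioi, ENNReal.ofReal_le_ofReal_iff (gaussQ_nonneg x)] at h

lemma gaussianReal_Ioi_of_pos {v : ℝ} (hv : 0 < v) (t : ℝ) :
    gaussianReal 0 v.toNNReal (Set.Ioi t) = gaussianReal 0 1 (Set.Ioi (t / √v)) := by
  have hs : 0 < √v := Real.sqrt_pos.mpr hv
  have hmap : gaussianReal 0 v.toNNReal = (gaussianReal 0 1).map (√v * ·) := by
    rw [gaussianReal_map_const_mul]
    congr
    · simp
    · ext; simp [Real.sq_sqrt hv.le, hv.le]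
  rw [hmap, Measure.map_apply (measurable_const_mul _) measurableSet_Ioi]
  congr 1
  ext z
  simp [div_lt_iff₀ hs, mul_comm]

lemma map_dotProduct_pi_gaussianReal {ι : Type*} [Fintype ι] (y : ι → ℝ) :
    (Measure.pi fun _ : ι => gaussianReal 0 1).map (fun x => y ⬝ᵥ x) =
      gaussianReal 0 (y ⬝ᵥ y).toNNReal := by
  set L : StrongDual ℝ (EuclideanSpace ℝ ι) := innerSL ℝ (WithLp.toLp 2 y)
  have hL : (fun x => y ⬝ᵥ x) = L ∘ WithLp.toLp 2 := by
    ext x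
    simp [L, dotProduct, PiLp.inner_apply, mul_comm]
  rw [hL, ← Measure.map_map L.continuous.measurable (by fun_prop), map_pi_eq_stdGaussian,
    IsGaussian.map_eq_gaussianReal, integral_strongDual_stdGaussian, variance_dual_stdGaussian,
    innerSL_apply_norm, EuclideanSpace.real_norm_sq_eq]
  simp [dotProduct, sq]

end StandardGaussian

section GaussianMeasure

variable {N : ℕ}

lemma gaussianPdf_nonneg (m : Fin N → ℝ) (A : Matrix (Fin N) (Fin N) ℝ) (u : Fin N → ℝ) :
    0 ≤ gaussianPdf m A u := by
  unfold gaussianPdf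
  positivity

lemma gaussianPdf_zero_one (x : Fin N → ℝ) :
    gaussianPdf 0 1 x = ∏ i, gaussianPDFReal 0 1 (x i) := by
  have hpow : (2 * Real.pi) ^ N * det (1 : Matrix (Fin N) (Fin N) ℝ) =
      ∏ _ : Fin N, 2 * Real.pi := by
    simp
  rw [gaussianPdf, hpow, Real.sqrt_prod _ fun _ _ => by positivity]
  simp only [gaussianPDFReal, inv_one, one_mulVec, sub_zero, mul_one, NNReal.coe_one,
    Finset.prod_mul_distrib, ← Real.exp_sum, Finset.prod_inv_distrib, dotProduct, Finset.mul_sum]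
  congr 2
  refine Finset.sum_congr rfl fun i _ => ?_
  ring

lemma gaussianMeasure_zero_one :
    gaussianMeasure (0 : Fin N → ℝ) 1 = Measure.pi fun _ => gaussianReal 0 1 := by
  refine (Measure.pi_eq fun s hs => ?_).symm
  have hint : Integrable (fun x : Fin N → ℝ => ∏ i, gaussianPDFReal 0 1 (x i)) :=
    Integrable.fintype_prod fun _ => integrable_gaussianPDFReal 0 1
  rw [gaussianMeasure, withDensity_apply _ (MeasurableSet.univ_pi hs)]
  simp_rw [gaussianPdf_zero_one]
  rw [← ofReal_integral_eq_lintegral_ofReal hint.integrableOn (Filter.Eventually.of_forall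
      fun x => Finset.prod_nonneg fun i _ => gaussianPDFReal_nonneg 0 1 _),
    volume_pi, Measure.restrict_pi_pi, integral_fintype_prod_eq_prod,
    ENNReal.ofReal_prod_of_nonneg fun i _ =>
      setIntegral_nonneg (hs i) fun x _ => gaussianPDFReal_nonneg 0 1 x]
  exact Finset.prod_congr rfl fun i _ => (gaussianReal_apply_eq_integral _ one_ne_zero _).symm

lemma abs_det_mul_gaussianPdf_add_mulVec {C : Matrix (Fin N) (Fin N) ℝ} (hC : IsUnit C)
    (m x : Fin N → ℝ) : |C.det| * gaussianPdf m (C * Cᵀ) (m + C *ᵥ x) = gaussianPdf 0 1 x := by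
  have hdet : (2 * Real.pi) ^ N * (C * Cᵀ).det = ((2 * Real.pi) ^ N * 1) * |C.det| ^ 2 := by
    rw [det_mul, det_transpose, sq_abs]
    ring
  rw [gaussianPdf, gaussianPdf, hdet, Real.sqrt_mul (by positivity), Real.sqrt_sq (abs_nonneg _),
    add_sub_cancel_left, mulVec_dotProduct_inv_mul_transpose hC, det_one, inv_one, one_mulVec,
    sub_zero]
  have : |C.det| ≠ 0 := abs_ne_zero.mpr ((isUnit_iff_isUnit_det C).mp hC).ne_zero
  field_simp

lemma gaussianMeasure_mul_transpose {C : Matrix (Fin N) (Fin N) ℝ} (hC : IsUnit C)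
    (m : Fin N → ℝ) :
    gaussianMeasure m (C * Cᵀ) = (gaussianMeasure 0 1).map (fun x => m + C *ᵥ x) := by
  set φ : (Fin N → ℝ) → Fin N → ℝ := fun x => m + C *ᵥ x
  have hφ : Measurable φ := by fun_prop
  have hφ' : ∀ x, HasFDerivAt φ (LinearMap.toContinuousLinearMap (toLin' C)) x := fun x =>
    (LinearMap.toContinuousLinearMap (toLin' C)).hasFDerivAt.const_add m
  have hsurj : Function.Surjective φ := fun u =>
    ⟨C⁻¹ *ᵥ (u - m), by
      simp [φ, mulVec_mulVec, mul_nonsing_inv _ ((isUnit_iff_isUnit_det C).mp hC)]⟩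
  have hinj : Function.Injective φ := fun x y h =>
    mulVec_injective_iff_isUnit.mpr hC (add_left_cancel h)
  ext T hT
  rw [Measure.map_apply hφ hT, gaussianMeasure, gaussianMeasure, withDensity_apply _ hT,
    withDensity_apply _ (hφ hT)]
  conv_lhs => rw [← Set.image_preimage_eq T hsurj]
  rw [lintegral_image_eq_lintegral_abs_det_fderiv_mul volume (hφ hT)
    (fun x _ => (hφ' x).hasFDerivWithinAt) hinj.injOn]
  refine setLIntegral_congr_fun (hφ hT) fun x _ => ?_
  rw [LinearMap.det_toContinuousLinearMap, LinearMap.det_toLin',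
    ← ENNReal.ofReal_mul (abs_nonneg _), abs_det_mul_gaussianPdf_add_mulVec hC]

lemma gaussianMeasure_halfspace {A : Matrix (Fin N) (Fin N) ℝ} (hA : A.PosDef)
    (m : Fin N → ℝ) {w : Fin N → ℝ} (hw : w ≠ 0) (t : ℝ) :
    gaussianMeasure m A {u | t < w ⬝ᵥ (u - m)} =
      gaussianReal 0 1 (Set.Ioi (t / √(w ⬝ᵥ A *ᵥ w))) := by
  have hpos := hA.dotProduct_mulVec_self_pos hw
  obtain ⟨C, hC, rfl⟩ := hA.exists_isUnit_mul_transpose_eq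
  have hpre : (fun x => m + C *ᵥ x) ⁻¹' {u | t < w ⬝ᵥ (u - m)} =
      (fun x => (Cᵀ *ᵥ w) ⬝ᵥ x) ⁻¹' Set.Ioi t := by
    ext x
    simp [dotProduct_mulVec, ← mulVec_transpose]
  have hnorm : (Cᵀ *ᵥ w) ⬝ᵥ (Cᵀ *ᵥ w) = w ⬝ᵥ (C * Cᵀ) *ᵥ w := by
    rw [← mulVec_mulVec, dotProduct_mulVec, ← mulVec_transpose, transpose_transpose,
      dotProduct_comm]
  rw [gaussianMeasure_mul_transpose hC, gaussianMeasure_zero_one,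
    Measure.map_apply (by fun_prop) (measurableSet_lt measurable_const (by fun_prop)), hpre,
    ← Measure.map_apply (by fun_prop) measurableSet_Ioi, map_dotProduct_pi_gaussianReal, hnorm,
    gaussianReal_Ioi_of_pos hpos]

lemma gaussianPdf_eq_exp_mul_gaussianPdf {A : Matrix (Fin N) (Fin N) ℝ}
    (hA : A.IsHermitian) (m₁ m₂ u : Fin N → ℝ) :
    gaussianPdf m₁ A u =
      Real.exp ((A⁻¹ *ᵥ (m₁ - m₂)) ⬝ᵥ (u - m₁) + (m₁ - m₂) ⬝ᵥ A⁻¹ *ᵥ (m₁ - m₂) / 2) *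
        gaussianPdf m₂ A u := by
  have hsub : u - m₂ = (u - m₁) + (m₁ - m₂) := by abel
  have hcomm := hA.inv.dotProduct_mulVec_comm (u - m₁) (m₁ - m₂)
  rw [gaussianPdf, gaussianPdf, mul_left_comm, ← Real.exp_add, hsub, dotProduct_comm (A⁻¹ *ᵥ _)]
  congr 2
  simp only [add_dotProduct, dotProduct_add, mulVec_add]
  linarith

end GaussianMeasure

lemma withDensity_apply_le_mul_add {α : Type*} [MeasurableSpace α] {μ : Measure α}
    {f g : α → ENNReal} {B T : Set α} (hB : MeasurableSet B) (hT : MeasurableSet T)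
    {c : ENNReal} (hc : c ≠ ⊤) (hfg : ∀ x ∉ B, f x ≤ c * g x) :
    μ.withDensity f T ≤ c * μ.withDensity g T + μ.withDensity f B := by
  have hTB : MeasurableSet (T \ B) := hT.diff hB
  calc μ.withDensity f T
      ≤ μ.withDensity f (T \ B) + μ.withDensity f B := by
        rw [add_comm]
        exact (measure_le_inter_add_sdiff _ T B).trans
          (add_le_add_left (measure_mono Set.inter_subset_right) _)
    _ ≤ c * μ.withDensity g T + μ.withDensity f B := by
        gcongr
        rw [withDensity_apply _ hTB, withDensity_apply _ hT, ← lintegral_const_mul' _ _ hc]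
        exact (setLIntegral_mono' hTB fun x hx => hfg x hx.2).trans
          (lintegral_mono_set Set.sdiff_subset)

lemma gaussianMeasure_le_exp_mul_add {N : ℕ} {A : Matrix (Fin N) (Fin N) ℝ} (hA : A.PosDef)
    {m₁ m₂ : Fin N → ℝ} (hm : m₁ ≠ m₂) (ε : ℝ) {T : Set (Fin N → ℝ)} (hT : MeasurableSet T) :
    gaussianMeasure m₁ A T ≤
      ENNReal.ofReal (Real.exp ε) * gaussianMeasure m₂ A T +
        ENNReal.ofReal (gaussQ (ε / wnorm A⁻¹ (m₁ - m₂) - wnorm A⁻¹ (m₁ - m₂) / 2)) := by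
  set y := m₁ - m₂
  set w := A⁻¹ *ᵥ y
  set a := wnorm A⁻¹ y
  have hy : y ≠ 0 := sub_ne_zero.mpr hm
  have hAw : A *ᵥ w = y := by
    rw [mulVec_mulVec, mul_nonsing_inv _ hA.det_pos.ne'.isUnit, one_mulVec]
  have hw : w ≠ 0 := fun h => hy (by rw [← hAw, h, mulVec_zero])
  have hwAw : w ⬝ᵥ A *ᵥ w = a ^ 2 := by
    rw [hAw, dotProduct_comm, show a = √(y ⬝ᵥ w) from rfl,
      Real.sq_sqrt (hA.inv.dotProduct_mulVec_self_pos hy).le]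
  have ha : 0 < a := Real.sqrt_pos.mpr (hA.inv.dotProduct_mulVec_self_pos hy)
  -- the density ratio exceeds `exp ε` exactly on the half-space `B`
  set B := {u | ε - a ^ 2 / 2 < w ⬝ᵥ (u - m₁)}
  have hB : gaussianMeasure m₁ A B = ENNReal.ofReal (gaussQ (ε / a - a / 2)) := by
    rw [gaussianMeasure_halfspace hA m₁ hw, hwAw, Real.sqrt_sq ha.le, gaussianReal_Ioi]
    congr 2
    field_simp
  rw [← hB, gaussianMeasure, gaussianMeasure]
  refine withDensity_apply_le_mul_add (measurableSet_lt measurable_const (by fun_prop)) hT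
    ENNReal.ofReal_ne_top fun u hu => ?_
  rw [← ENNReal.ofReal_mul (Real.exp_pos ε).le, gaussianPdf_eq_exp_mul_gaussianPdf hA.1 m₁ m₂ u]
  refine ENNReal.ofReal_le_ofReal (mul_le_mul_of_nonneg_right ?_ (gaussianPdf_nonneg _ _ _))
  rw [Real.exp_le_exp]
  have : y ⬝ᵥ A⁻¹ *ᵥ y = a ^ 2 := by rw [← hwAw, hAw, dotProduct_comm]
  simp only [Set.mem_ofPred_eq, not_lt] at hu
  linarith
theorem gaussian_mechanism_dp_general {N d : ℕ}
    (M : Matrix (Fin N) (Fin d) ℝ) (hM : M.rank = d) (c : Fin N → ℝ)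
    (ε₀ ε δ : ℝ) (hε : 0 ≤ ε)
    (S Sbar : Matrix (Fin N) (Fin N) ℝ) (hS : S.PosDef) (hSbar : Sbar.PosDef)
    (hle : (Sbar - S).PosSemidef)
    (hQ : ∀ d₁ d₂ : Fin d → ℝ,
      0 < Real.sqrt ((d₁ - d₂) ⬝ᵥ (d₁ - d₂)) →
      Real.sqrt ((d₁ - d₂) ⬝ᵥ (d₁ - d₂)) ≤ ε₀ →
      gaussQ (ε / wnorm S⁻¹ (M *ᵥ (d₁ - d₂)) - wnorm S⁻¹ (M *ᵥ (d₁ - d₂)) / 2) ≤ δ) :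
    ∀ d₁ d₂ : Fin d → ℝ, Real.sqrt ((d₁ - d₂) ⬝ᵥ (d₁ - d₂)) ≤ ε₀ →
      ∀ T : Set (Fin N → ℝ), MeasurableSet T →
        gaussianMeasure (M *ᵥ d₁ + c) Sbar T ≤
          ENNReal.ofReal (Real.exp ε) * gaussianMeasure (M *ᵥ d₂ + c) Sbar T +
            ENNReal.ofReal δ := by
  intro d₁ d₂ hdist T hT
  rcases eq_or_ne d₁ d₂ with rfl | hd
  · exact le_add_right <| le_mul_of_one_le_left zero_le <|
      ENNReal.one_le_ofReal.mpr (Real.one_le_exp hε)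
  have hv : d₁ - d₂ ≠ 0 := sub_ne_zero.mpr hd
  have hy : M *ᵥ (d₁ - d₂) ≠ 0 := fun h =>
    hv (M.mulVec_injective_of_rank_eq (by rw [hM, Fintype.card_fin]) (h.trans (mulVec_zero M).symm))
  have hm : M *ᵥ d₁ + c - (M *ᵥ d₂ + c) = M *ᵥ (d₁ - d₂) := by rw [mulVec_sub]; abel
  have ha : 0 < wnorm Sbar⁻¹ (M *ᵥ (d₁ - d₂)) :=
    Real.sqrt_pos.mpr (hSbar.inv.dotProduct_mulVec_self_pos hy)
  have hab : wnorm Sbar⁻¹ (M *ᵥ (d₁ - d₂)) ≤ wnorm S⁻¹ (M *ᵥ (d₁ - d₂)) :=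
    Real.sqrt_le_sqrt (hS.dotProduct_inv_mulVec_le hSbar hle _)
  have hQd := hQ d₁ d₂
    (Real.sqrt_pos.mpr (by simpa using dotProduct_star_self_pos_iff.mpr hv)) hdist
  have hmech := gaussianMeasure_le_exp_mul_add hSbar (sub_ne_zero.mp (hm ▸ hy)) ε hT
  rw [hm] at hmech
  refine hmech.trans (add_le_add_right (ENNReal.ofReal_le_ofReal ?_) _)
  exact (gaussQ_antitone (sub_le_sub (div_le_div_of_nonneg_left hε ha hab) (by linarith))).trans hQd

/-- Theorem 1 of the paper. -/
theorem gaussian_mechanism_dp {N d : ℕ}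
    (M : Matrix (Fin N) (Fin d) ℝ) (hM : M.rank = d) (c : Fin N → ℝ)
    (ε₀ ε δ : ℝ) (hε₀ : 0 < ε₀) (hε : 0 ≤ ε) (hδ : 0 ≤ δ)
    (S Sbar : Matrix (Fin N) (Fin N) ℝ) (hS : S.PosDef) (hSbar : Sbar.PosDef)
    (hle : (Sbar - S).PosSemidef)
    (hQ : ∀ d₁ d₂ : Fin d → ℝ,
      0 < Real.sqrt ((d₁ - d₂) ⬝ᵥ (d₁ - d₂)) →
      Real.sqrt ((d₁ - d₂) ⬝ᵥ (d₁ - d₂)) ≤ ε₀ →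
      gaussQ (ε / wnorm S⁻¹ (M *ᵥ (d₁ - d₂)) - wnorm S⁻¹ (M *ᵥ (d₁ - d₂)) / 2) ≤ δ) :
    ∀ d₁ d₂ : Fin d → ℝ, Real.sqrt ((d₁ - d₂) ⬝ᵥ (d₁ - d₂)) ≤ ε₀ →
      ∀ T : Set (Fin N → ℝ), MeasurableSet T →
        gaussianMeasure (M *ᵥ d₁ + c) Sbar T ≤
          ENNReal.ofReal (Real.exp ε) * gaussianMeasure (M *ᵥ d₂ + c) Sbar T +
            ENNReal.ofReal δ :=
  gaussian_mechanism_dp_general M hM c ε₀ ε δ hε S Sbar hS hSbar hle hQ
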